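/- Let X be a real Banach space and A ⊆ X a bounded set. Then A contains no ε-tree for any ε > 0 if and only if δ₁(A') = 0 for every subset A' ⊆ A. -/

import Mathlib

open Set Metric Bornology

variable {X : Type*} [NormedAddCommGroup X] [NormedSpace ℝ X] [CompleteSpace X]

/-- The set `(A - x) ∩ (x - A) = {d | x + d ∈ A ∧ x - d ∈ A}`. -/
def symmAt (A : Set X) (x : X) : Set X := {d | x + d ∈ A ∧ x - d ∈ A}

/-- The symmetrized set of `A` with respect to a family of points:
`⋂ i, (A - x i) ∩ (x i - A)`. -/
def symmSet {ι : Type*} (A : Set X) (x : ι → X) : Set X := ⋂ i, symmAt A (x i)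

/-- `Δ_N(A)`: the family of all symmetrized sets of `A` with respect to `N` points of `A`. -/
def DeltaFam (A : Set X) (N : ℕ) : Set (Set X) :=
  {D | ∃ x : Fin N → X, (∀ n, x n ∈ A) ∧ D = symmSet A x}

/-- `δ₀(A) = diam(A)/2`. -/
noncomputable def delta0 (A : Set X) : ℝ := diam A / 2

/-- `δ_N(A) = inf{δ₀(D) : D ∈ Δ_N(A)}`. -/
noncomputable def deltaN (A : Set X) (N : ℕ) : ℝ := sInf (delta0 '' DeltaFam A N)

/-- `δ_∞(A) = lim_N δ_N(A)`, which equals the infimum since the sequence is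
decreasing and bounded below. -/
noncomputable def deltaInf (A : Set X) : ℝ := ⨅ N : ℕ, deltaN A (N + 1)

/-- An `ε`-tree in `A`: a sequence `(xₙ)_{n ≥ 1}` in `A` with `xₙ = (x_{2n} + x_{2n+1})/2` and
`‖x_{2n} - x_{2n+1}‖ ≥ ε` for every `n ≥ 1`. -/
def IsTree (ε : ℝ) (A : Set X) (x : ℕ → X) : Prop :=
  (∀ n, 1 ≤ n → x n ∈ A) ∧
  ∀ n, 1 ≤ n →
    x n = (2⁻¹ : ℝ) • (x (2 * n) + x (2 * n + 1)) ∧ ε ≤ ‖x (2 * n) - x (2 * n + 1)‖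

/-! Call `A` *`ε`-splitting* if each of its points is the midpoint of two of its points at
distance at least `ε`. Growing a tree by splitting nodes again and again, `A` contains an `ε`-tree
iff some nonempty `A' ⊆ A` is `ε`-splitting (the nodes of a tree form one). Now `a ± d ∈ A'` says
exactly `d ∈ (A' - a) ∩ (a - A')`, a set symmetric about `0`, so a splitting of `a` of width `ε`
forces this set to have diameter at least `ε`, and diameter more than `ε` yields a splitting of
width more than `ε`. Hence `δ₁(A') ≥ ε / 2` for `ε`-splitting `A'`, and `A'` is `ε`-splitting
whenever `ε < 2 δ₁(A')`. -/

section DeltaOne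

omit [NormedSpace ℝ X] [CompleteSpace X]

variable {A : Set X}

lemma DeltaFam_one (A : Set X) : DeltaFam A 1 = symmAt A '' A := by
  ext D
  constructor
  · rintro ⟨x, hx, rfl⟩
    exact ⟨x 0, hx 0, (iInf_unique fun i => symmAt A (x i)).symm⟩
  · rintro ⟨a, ha, rfl⟩
    exact ⟨fun _ => a, fun _ => ha, (iInter_const _).symm⟩

lemma deltaN_one_eq (A : Set X) : deltaN A 1 = sInf ((fun a => diam (symmAt A a) / 2) '' A) := by
  rw [deltaN, DeltaFam_one, image_image]
  rfl

lemma deltaN_one_nonneg (A : Set X) : 0 ≤ deltaN A 1 := by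
  rw [deltaN_one_eq]
  exact Real.sInf_nonneg (by rintro _ ⟨a, -, rfl⟩; positivity)

lemma deltaN_one_le {a : X} (ha : a ∈ A) : deltaN A 1 ≤ diam (symmAt A a) / 2 := by
  rw [deltaN_one_eq]
  exact csInf_le ⟨0, by rintro _ ⟨a, -, rfl⟩; positivity⟩ (mem_image_of_mem _ ha)

lemma le_deltaN_one {r : ℝ} (hne : A.Nonempty) (h : ∀ a ∈ A, r ≤ diam (symmAt A a) / 2) :
    r ≤ deltaN A 1 := by
  rw [deltaN_one_eq]
  exact le_csInf (hne.image _) (by rintro _ ⟨a, ha, rfl⟩; exact h a ha)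

lemma deltaN_one_empty : deltaN (∅ : Set X) 1 = 0 := by
  rw [deltaN_one_eq, image_empty, Real.sInf_empty]

lemma Bornology.IsBounded.symmAt (hA : IsBounded A) (a : X) : IsBounded (symmAt A a) :=
  ((isometry_add_left a).antilipschitz.isBounded_preimage hA).subset fun _ hd => hd.1

end DeltaOne

section growTree

variable {α : Type*} (g : α → α × α) (a : α)

/-- Node `n ≥ 1` has children `2 * n` and `2 * n + 1`; the root is node `1` (node `0` is unused). -/
noncomputable def growTree : ℕ → α
  | 0 => a
  | 1 => a
  | n + 2 =>
    if (n + 2) % 2 = 0 then (g (growTree ((n + 2) / 2))).1 else (g (growTree ((n + 2) / 2))).2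
  decreasing_by all_goals omega

lemma growTree_two_mul {n : ℕ} (hn : 1 ≤ n) : growTree g a (2 * n) = (g (growTree g a n)).1 := by
  obtain ⟨m, rfl⟩ : ∃ m, n = m + 1 := ⟨n - 1, by omega⟩
  rw [show 2 * (m + 1) = 2 * m + 2 by ring, growTree, if_pos (by omega)]
  congr 3
  omega

lemma growTree_two_mul_add_one {n : ℕ} (hn : 1 ≤ n) :
    growTree g a (2 * n + 1) = (g (growTree g a n)).2 := by
  obtain ⟨m, rfl⟩ : ∃ m, n = m + 1 := ⟨n - 1, by omega⟩
  rw [show 2 * (m + 1) + 1 = (2 * m + 1) + 2 by ring, growTree, if_neg (by omega)]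
  congr 3
  omega

end growTree

section Splitting

omit [CompleteSpace X]

variable {ε : ℝ} {A : Set X}

def IsSplitting (ε : ℝ) (A : Set X) : Prop :=
  ∀ a ∈ A, ∃ b ∈ A, ∃ c ∈ A, a = (2⁻¹ : ℝ) • (b + c) ∧ ε ≤ ‖b - c‖

lemma IsTree.mono {B : Set X} {x : ℕ → X} (hx : IsTree ε A x) (hAB : A ⊆ B) :
    IsTree ε B x :=
  ⟨fun n hn => hAB (hx.1 n hn), hx.2⟩

lemma IsTree.isSplitting_image {x : ℕ → X} (hx : IsTree ε A x) :
    IsSplitting ε (x '' Ici 1) := by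
  rintro _ ⟨n, hn, rfl⟩
  exact ⟨x (2 * n), mem_image_of_mem x (by simp only [mem_Ici] at hn ⊢; omega),
    x (2 * n + 1), mem_image_of_mem x (by simp only [mem_Ici] at hn ⊢; omega), hx.2 n hn⟩

lemma IsTree.image_subset {x : ℕ → X} (hx : IsTree ε A x) :
    x '' Ici 1 ⊆ A := by
  rintro _ ⟨n, hn, rfl⟩
  exact hx.1 n hn

lemma exists_isTree_of_isSplitting (hne : A.Nonempty)
    (hA : IsSplitting ε A) : ∃ x : ℕ → X, IsTree ε A x := by
  choose b hb c hc hsplit using hA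
  let g : A → A × A := fun a => (⟨b a a.2, hb a a.2⟩, ⟨c a a.2, hc a a.2⟩)
  obtain ⟨a, ha⟩ := hne
  refine ⟨fun n => ↑(growTree g (⟨a, ha⟩ : A) n), fun n _ => Subtype.prop _,
    fun n hn => ?_⟩
  dsimp only
  rw [growTree_two_mul g _ hn, growTree_two_mul_add_one g _ hn]
  exact hsplit _ (Subtype.prop _)

lemma norm_sub_le_diam_symmAt (hA : IsBounded A) {b c : X} (hb : b ∈ A) (hc : c ∈ A) :
    ‖b - c‖ ≤ diam (symmAt A ((2⁻¹ : ℝ) • (b + c))) := by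
  set a := (2⁻¹ : ℝ) • (b + c)
  have hd : b - a ∈ symmAt A a := ⟨by rwa [add_sub_cancel], by convert hc using 1; module⟩
  have hnd : -(b - a) ∈ symmAt A a := ⟨by simpa only [← sub_eq_add_neg] using hd.2,
    by simpa only [sub_neg_eq_add] using hd.1⟩
  calc ‖b - c‖ = dist (b - a) (-(b - a)) := by rw [dist_eq_norm]; congr 1; module
    _ ≤ diam (symmAt A a) := dist_le_diam_of_mem (hA.symmAt a) hd hnd

lemma le_deltaN_one_of_isSplitting (hA : IsBounded A) (hne : A.Nonempty)
    (hsplit : IsSplitting ε A) : ε / 2 ≤ deltaN A 1 := by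
  refine le_deltaN_one hne fun a ha => ?_
  obtain ⟨b, hb, c, hc, rfl, hbc⟩ := hsplit a ha
  linarith [norm_sub_le_diam_symmAt hA hb hc]

lemma isSplitting_of_lt_two_mul_deltaN_one (hε : 0 ≤ ε) (h : ε < 2 * deltaN A 1) :
    IsSplitting ε A := by
  intro a ha
  obtain ⟨e, he, hlt⟩ : ∃ e ∈ symmAt A a, ε < 2 * ‖e‖ := by
    by_contra! hsmall
    have : diam (symmAt A a) ≤ 2 * (ε / 2) :=
      diam_le_of_subset_closedBall (by positivity) fun e he => by
        rw [mem_closedBall, dist_zero_right]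
        linarith [hsmall e he]
    linarith [deltaN_one_le ha]
  refine ⟨a + e, he.1, a - e, he.2, ?_, ?_⟩
  · module
  · rw [add_sub_sub_cancel, ← two_smul ℝ, norm_smul, Real.norm_two]
    exact hlt.le

end Splitting

/-- a bounded set `A` contains no `ε`-tree for any `ε > 0` iff `δ₁(A') = 0` for
every subset `A' ⊆ A`. -/
theorem stmt14 (A : Set X) (hA : IsBounded A) :
    (∀ ε : ℝ, 0 < ε → ¬ ∃ x : ℕ → X, IsTree ε A x) ↔
      ∀ A' : Set X, A' ⊆ A → deltaN A' 1 = 0 := by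
  constructor
  · intro hno A' hA'
    rcases A'.eq_empty_or_nonempty with rfl | hne
    · exact deltaN_one_empty
    by_contra hne0
    have hpos : 0 < deltaN A' 1 := (deltaN_one_nonneg A').lt_of_ne' hne0
    obtain ⟨x, hx⟩ := exists_isTree_of_isSplitting hne
      (isSplitting_of_lt_two_mul_deltaN_one hpos.le (by linarith))
    exact hno _ hpos ⟨x, hx.mono hA'⟩
  · rintro h ε hε ⟨x, hx⟩
    have := le_deltaN_one_of_isSplitting (hA.subset hx.image_subset) ⟨x 1, 1, self_mem_Ici, rfl⟩
      hx.isSplitting_image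
    rw [h _ hx.image_subset] at this
    linarith
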